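/- Let $\mathcal{K}$ be a Kähler–Poisson algebra with Levi-Civita connection $\nabla$ on $\mathfrak{g}$, and let $\mathcal{D}^i(a)=\eta\{x^k,a\}g_{kl}\{x^l,x^i\}$ and $\mathcal{D}^{ij}=g(\mathcal{D}^i,\mathcal{D}^j)$. Then $g([\mathcal{D}^i,\mathcal{D}^j],\mathcal{D}^k)=\mathcal{D}^i(\mathcal{D}^{jk})-\mathcal{D}^j(\mathcal{D}^{ik})$, and consequently the Levi-Civita connection is given by $\nabla_{\mathcal{D}^i}\mathcal{D}^j=\tfrac12\mathcal{D}^i(\mathcal{D}^{jk})\mathcal{D}_k-\tfrac12\mathcal{D}^j(\mathcal{D}^{ik})\mathcal{D}_k+\tfrac12\mathcal{D}^k(\mathcal{D}^{ij})\mathcal{D}_k$, where $\mathcal{D}_k=g_{kl}\mathcal{D}^l$. -/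

import Mathlib

/-- The `A`-module of inner derivations of a Poisson algebra `(A, P)`,
i.e. the module generated by the derivations `a ↦ {c, a}`. -/
def innerDer {A : Type*} [CommRing A] (P : A → A → A) : Submodule A (A → A) :=
  Submodule.span A {d : A → A | ∃ c : A, d = P c}

/-- The metric on derivations induced by the matrix `g` and the distinguished
elements `x¹,…,xᵐ`:  `g(α,β) = α(xⁱ) g_{ij} β(xʲ)`. -/
def gform {A : Type*} [CommRing A] {m : ℕ} (x : Fin m → A)
    (g : Fin m → Fin m → A) (α β : A → A) : A :=
  ∑ i, ∑ j, α (x i) * g i j * β (x j)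

/-- `𝒟^{ij} = η {xⁱ, xˡ} g_{lk} {xʲ, xᵏ}`. -/
def Dmat {A : Type*} [CommRing A] {m : ℕ} (P : A → A → A) (x : Fin m → A)
    (g : Fin m → Fin m → A) (η : A) (i j : Fin m) : A :=
  η * ∑ l, ∑ k, P (x i) (x l) * g l k * P (x j) (x k)

/-- `𝒟^i_j = 𝒟^{ik} g_{kj}`. -/
def Dlow {A : Type*} [CommRing A] {m : ℕ} (P : A → A → A) (x : Fin m → A)
    (g : Fin m → Fin m → A) (η : A) (i j : Fin m) : A :=
  ∑ k, Dmat P x g η i k * g k j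

/-- The derivation `𝒟ⁱ(a) = η {xᵏ, a} g_{kl} {xˡ, xⁱ}`. -/
def Dder {A : Type*} [CommRing A] {m : ℕ} (P : A → A → A) (x : Fin m → A)
    (g : Fin m → Fin m → A) (η : A) (i : Fin m) : A → A :=
  fun a => η * ∑ k, ∑ l, P (x k) a * g k l * P (x l) (x i)

/-! The Kähler–Poisson identity says that the derivations `𝒟ᵏ` form a frame of `𝔤` dual to the
`xᵏ`: every inner derivation satisfies `μ = μ(xᵏ) g_{kl} 𝒟ˡ`, equivalently `g(μ, 𝒟ᵏ) = μ(xᵏ)`.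
By the Jacobi identity `𝔤` is closed under commutators, so
`g([𝒟ⁱ,𝒟ʲ],𝒟ᵏ) = [𝒟ⁱ,𝒟ʲ](xᵏ) = 𝒟ⁱ(𝒟ʲᵏ) - 𝒟ʲ(𝒟ⁱᵏ)`.
The numbers `N_{ijk} = (∇_{𝒟ⁱ}𝒟ʲ)(xᵏ)` then satisfy `N_{ijk} + N_{ikj} = 𝒟ⁱ(𝒟ʲᵏ)` (metricity) and
`N_{ijk} - N_{jik} = 𝒟ⁱ(𝒟ʲᵏ) - 𝒟ʲ(𝒟ⁱᵏ)` (no torsion); solving this system as in Koszul's formula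
gives `2 N_{ijk}`, and the frame expansion recovers `∇_{𝒟ⁱ}𝒟ʲ`. -/

theorem Finset.sum_comm_pairs {β ι κ : Type*} [AddCommMonoid β] (s : Finset ι) (t : Finset κ)
    (f : ι → ι → κ → κ → β) :
    ∑ a ∈ s, ∑ b ∈ s, ∑ c ∈ t, ∑ d ∈ t, f a b c d =
      ∑ c ∈ t, ∑ d ∈ t, ∑ a ∈ s, ∑ b ∈ s, f a b c d := by
  simpa only [Finset.sum_product] using
    Finset.sum_comm (s := s ×ˢ s) (t := t ×ˢ t) (f := fun p q => f p.1 p.2 q.1 q.2)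

section InnerDerivations

variable {A : Type*} [CommRing A] {P : A → A → A}

lemma map_add_of_mem_innerDer (hP_add : ∀ a b c, P a (b + c) = P a b + P a c)
    {μ : A → A} (hμ : μ ∈ innerDer P) (u v : A) : μ (u + v) = μ u + μ v := by
  induction hμ using Submodule.span_induction with
  | mem d hd => obtain ⟨c, rfl⟩ := hd; exact hP_add c u v
  | zero => simp
  | add α β _ _ hα hβ => simp only [Pi.add_apply, hα, hβ]; ring
  | smul c α _ hα => simp only [Pi.smul_apply, smul_eq_mul, hα]; ring

lemma map_zero_of_mem_innerDer (hP_add : ∀ a b c, P a (b + c) = P a b + P a c)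
    {μ : A → A} (hμ : μ ∈ innerDer P) : μ 0 = 0 :=
  (AddMonoidHom.mk' μ (map_add_of_mem_innerDer hP_add hμ)).map_zero

lemma map_mul_of_mem_innerDer (hP_leib : ∀ a b c, P a (b * c) = P a b * c + b * P a c)
    {μ : A → A} (hμ : μ ∈ innerDer P) (u v : A) : μ (u * v) = μ u * v + u * μ v := by
  induction hμ using Submodule.span_induction with
  | mem d hd => obtain ⟨c, rfl⟩ := hd; exact hP_leib c u v
  | zero => simp
  | add α β _ _ hα hβ => simp only [Pi.add_apply, hα, hβ]; ring
  | smul c α _ hα => simp only [Pi.smul_apply, smul_eq_mul, hα]; ring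

lemma commutator_P_P_eq (hP_antisym : ∀ a b, P a b = - P b a)
    (hP_add : ∀ a b c, P a (b + c) = P a b + P a c)
    (hP_jacobi : ∀ a b c, P a (P b c) + P b (P c a) + P c (P a b) = 0) (b c : A) :
    (fun a => P c (P b a) - P b (P c a)) = P (P c b) := by
  funext a
  have hneg : P b (-P c a) = -P b (P c a) := (AddMonoidHom.mk' (P b) (hP_add b)).map_neg _
  have hj := hP_jacobi c b a
  rw [hP_antisym a c, hneg, hP_antisym a (P c b)] at hj
  linear_combination hj

lemma commutator_P_mem_innerDer (hP_antisym : ∀ a b, P a b = - P b a)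
    (hP_add : ∀ a b c, P a (b + c) = P a b + P a c)
    (hP_leib : ∀ a b c, P a (b * c) = P a b * c + b * P a c)
    (hP_jacobi : ∀ a b c, P a (P b c) + P b (P c a) + P c (P a b) = 0)
    (c : A) {β : A → A} (hβ : β ∈ innerDer P) :
    (fun a => P c (β a) - β (P c a)) ∈ innerDer P := by
  induction hβ using Submodule.span_induction with
  | mem d hd =>
    obtain ⟨b, rfl⟩ := hd
    rw [commutator_P_P_eq hP_antisym hP_add hP_jacobi]
    exact Submodule.subset_span ⟨P c b, rfl⟩
  | zero =>
    convert (innerDer P).zero_mem using 1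
    funext a
    simp [map_zero_of_mem_innerDer hP_add (Submodule.subset_span ⟨c, rfl⟩)]
  | add α β _ _ hα hβ =>
    convert add_mem hα hβ using 1
    funext a
    simp only [Pi.add_apply, hP_add]
    ring
  | smul b β hβ ih =>
    convert add_mem (Submodule.smul_mem _ b ih) (Submodule.smul_mem _ (P c b) hβ) using 1
    funext a
    simp only [Pi.add_apply, Pi.smul_apply, smul_eq_mul, hP_leib]
    ring

lemma commutator_mem_innerDer (hP_antisym : ∀ a b, P a b = - P b a)
    (hP_add : ∀ a b c, P a (b + c) = P a b + P a c)
    (hP_leib : ∀ a b c, P a (b * c) = P a b * c + b * P a c)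
    (hP_jacobi : ∀ a b c, P a (P b c) + P b (P c a) + P c (P a b) = 0)
    {α β : A → A} (hα : α ∈ innerDer P) (hβ : β ∈ innerDer P) :
    (fun a => α (β a) - β (α a)) ∈ innerDer P := by
  induction hα using Submodule.span_induction with
  | mem d hd =>
    obtain ⟨c, rfl⟩ := hd
    exact commutator_P_mem_innerDer hP_antisym hP_add hP_leib hP_jacobi c hβ
  | zero =>
    convert (innerDer P).zero_mem using 1
    funext a
    simp [map_zero_of_mem_innerDer hP_add hβ]
  | add α₁ α₂ _ _ ih₁ ih₂ =>
    convert add_mem ih₁ ih₂ using 1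
    funext a
    simp only [Pi.add_apply, map_add_of_mem_innerDer hP_add hβ]
    ring
  | smul b α hα ih =>
    convert add_mem (Submodule.smul_mem _ b ih) (Submodule.smul_mem _ (-β b) hα) using 1
    funext a
    simp only [Pi.add_apply, Pi.smul_apply, smul_eq_mul, map_mul_of_mem_innerDer hP_leib hβ]
    ring

end InnerDerivations

section Frame

variable {A : Type*} [CommRing A] {P : A → A → A} {m : ℕ} (x : Fin m → A)
  (g : Fin m → Fin m → A) (η : A)

lemma Dder_mem_innerDer (i : Fin m) : Dder P x g η i ∈ innerDer P := by
  have h : Dder P x g η i = ∑ k, (η * ∑ l, g k l * P (x l) (x i)) • P (x k) := by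
    funext a
    simp only [Dder, Finset.sum_apply, Pi.smul_apply, smul_eq_mul, Finset.mul_sum,
      Finset.sum_mul]
    refine Finset.sum_congr rfl fun k _ => Finset.sum_congr rfl fun l _ => ?_
    ring
  rw [h]
  exact Submodule.sum_mem _ fun k _ => Submodule.smul_mem _ _ (Submodule.subset_span ⟨x k, rfl⟩)

lemma Dder_apply_x (hP_antisym : ∀ a b, P a b = - P b a) (hg_symm : ∀ i j, g i j = g j i)
    (i j : Fin m) : Dder P x g η i (x j) = Dmat P x g η i j := by
  simp only [Dder, Dmat]
  rw [Finset.sum_comm]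
  refine congrArg _ (Finset.sum_congr rfl fun k _ => Finset.sum_congr rfl fun l _ => ?_)
  rw [hP_antisym (x i) (x k), hP_antisym (x j) (x l), hg_symm k l]
  ring

lemma Dmat_comm (hP_antisym : ∀ a b, P a b = - P b a) (hg_symm : ∀ i j, g i j = g j i)
    (i j : Fin m) : Dmat P x g η i j = Dmat P x g η j i := by
  simp only [Dmat]
  rw [Finset.sum_comm]
  refine congrArg _ (Finset.sum_congr rfl fun k _ => Finset.sum_congr rfl fun l _ => ?_)
  rw [hP_antisym (x i) (x l), hP_antisym (x j) (x k), hg_symm l k]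
  ring

lemma gform_comm (hg_symm : ∀ i j, g i j = g j i) (α β : A → A) :
    gform x g α β = gform x g β α := by
  rw [gform, gform, Finset.sum_comm]
  refine Finset.sum_congr rfl fun i _ => Finset.sum_congr rfl fun j _ => ?_
  rw [hg_symm j i]
  ring

lemma eq_sum_smul_Dder_of_mem_innerDer (hP_antisym : ∀ a b, P a b = - P b a)
    (hg_symm : ∀ i j, g i j = g j i)
    (hKP : ∀ a b, η * (∑ i, ∑ j, ∑ k, ∑ l,
        P a (x i) * g i j * P (x j) (x k) * g k l * P (x l) b) = - P a b)
    {μ : A → A} (hμ : μ ∈ innerDer P) :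
    μ = ∑ k, μ (x k) • ∑ l, g k l • Dder P x g η l := by
  induction hμ using Submodule.span_induction with
  | mem d hd =>
    obtain ⟨c, rfl⟩ := hd
    funext a
    rw [hP_antisym c a, ← hKP a c]
    simp only [Dder, Finset.sum_apply, Pi.smul_apply, smul_eq_mul, Finset.mul_sum]
    rw [Finset.sum_comm_pairs, Finset.sum_comm]
    refine Finset.sum_congr rfl fun k _ => Finset.sum_congr rfl fun l _ =>
      Finset.sum_congr rfl fun i _ => Finset.sum_congr rfl fun j _ => ?_
    rw [hP_antisym (x i) a, hP_antisym c (x k), hg_symm k l]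
    ring
  | zero => simp
  | add α β _ _ hα hβ =>
    conv_lhs => rw [hα, hβ]
    simp only [Pi.add_apply, add_smul, Finset.sum_add_distrib]
  | smul c α _ hα =>
    conv_lhs => rw [hα]
    simp only [Pi.smul_apply, smul_eq_mul, mul_smul, Finset.smul_sum]


lemma gform_Dder_right (hP_antisym : ∀ a b, P a b = - P b a) (hg_symm : ∀ i j, g i j = g j i)
    (hKP : ∀ a b, η * (∑ i, ∑ j, ∑ k, ∑ l,
        P a (x i) * g i j * P (x j) (x k) * g k l * P (x l) b) = - P a b)
    ⦃μ : A → A⦄ (hμ : μ ∈ innerDer P) (r : Fin m) :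
    gform x g μ (Dder P x g η r) = μ (x r) := by
  conv_rhs => rw [eq_sum_smul_Dder_of_mem_innerDer x g η hP_antisym hg_symm hKP hμ]
  simp only [gform, Finset.sum_apply, Pi.smul_apply, smul_eq_mul, Finset.mul_sum,
    Dder_apply_x x g η hP_antisym hg_symm, Dmat_comm x g η hP_antisym hg_symm r]
  refine Finset.sum_congr rfl fun k _ => Finset.sum_congr rfl fun l _ => ?_
  ring

lemma eq_sum_smul_of_coe_eq_Dder (hP_antisym : ∀ a b, P a b = - P b a)
    (hg_symm : ∀ i j, g i j = g j i)
    (hKP : ∀ a b, η * (∑ i, ∑ j, ∑ k, ∑ l,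
        P a (x i) * g i j * P (x j) (x k) * g k l * P (x l) b) = - P a b)
    {δ : Fin m → innerDer P} (hδ : ∀ i, (δ i : A → A) = Dder P x g η i) (μ : innerDer P) :
    μ = ∑ k, (μ : A → A) (x k) • ∑ l, g k l • δ l := by
  ext1
  simpa only [Submodule.coe_sum, Submodule.coe_smul, hδ]
    using eq_sum_smul_Dder_of_mem_innerDer x g η hP_antisym hg_symm hKP μ.2

end Frame

lemma two_mul_eq_koszul {ι A : Type*} [CommRing A] {N M : ι → ι → ι → A}
    (hM_symm : ∀ p q r, M p q r = M p r q)
    (htorsion : ∀ p q r, N p q r - N q p r = M p q r - M q p r)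
    (hmetric : ∀ p q r, M p q r = N p q r + N p r q) (i j k : ι) :
    2 * N i j k = M i j k - M j i k + M k i j := by
  linear_combination -hmetric i j k - hmetric j k i + hmetric k i j + htorsion i j k
    - htorsion i k j - htorsion j k i + hM_symm i j k - hM_symm k i j

theorem leviCivita_on_Dder_general
    {A : Type*} [CommRing A]
    (P : A → A → A)
    (hP_antisym : ∀ a b, P a b = - P b a)
    (hP_add : ∀ a b c, P a (b + c) = P a b + P a c)
    (hP_leib : ∀ a b c, P a (b * c) = P a b * c + b * P a c)
    (hP_jacobi : ∀ a b c, P a (P b c) + P b (P c a) + P c (P a b) = 0)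
    {m : ℕ} (x : Fin m → A) (g : Fin m → Fin m → A)
    (hg_symm : ∀ i j, g i j = g j i)
    (η : A)
    (hKP : ∀ a b, η * (∑ i, ∑ j, ∑ k, ∑ l,
        P a (x i) * g i j * P (x j) (x k) * g k l * P (x l) b) = - P a b)
    [Invertible (2 : A)]
    (nabla : innerDer P → innerDer P → innerDer P)
    (hmetric : ∀ α β γ : innerDer P,
      (α : A → A) (gform x g (β : A → A) (γ : A → A)) =
        gform x g ((nabla α β : innerDer P) : A → A) (γ : A → A)
        + gform x g (β : A → A) ((nabla α γ : innerDer P) : A → A))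
    (htf : ∀ α β γ : innerDer P,
      ((γ : A → A) = fun a => (α : A → A) ((β : A → A) a) - (β : A → A) ((α : A → A) a)) →
      nabla α β - nabla β α = γ) :
    (∀ i j k : Fin m,
      gform x g
        (fun a => Dder P x g η i (Dder P x g η j a) - Dder P x g η j (Dder P x g η i a))
        (Dder P x g η k)
      = Dder P x g η i (Dmat P x g η j k) - Dder P x g η j (Dmat P x g η i k)) ∧
    (∀ (δ : Fin m → innerDer P), (∀ i, ((δ i : innerDer P) : A → A) = Dder P x g η i) →
      ∀ i j : Fin m,
        nabla (δ i) (δ j) =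
          ∑ k, (⅟(2 : A) *
              (Dder P x g η i (Dmat P x g η j k) - Dder P x g η j (Dmat P x g η i k)
                + Dder P x g η k (Dmat P x g η i j))) •
            (∑ l, g k l • δ l)) := by
  have hD_apply := Dder_apply_x x g η hP_antisym hg_symm
  have hg_Dder := gform_Dder_right x g η hP_antisym hg_symm hKP
  have hcomm (i j : Fin m) := commutator_mem_innerDer hP_antisym hP_add hP_leib hP_jacobi
    (Dder_mem_innerDer x g η i) (Dder_mem_innerDer x g η j)
  refine ⟨fun i j k => by rw [hg_Dder (hcomm i j), hD_apply, hD_apply], fun δ hδ i j => ?_⟩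
  have htorsion (p q r : Fin m) :
      ((nabla (δ p) (δ q) : A → A) (x r) - (nabla (δ q) (δ p) : A → A) (x r)) =
        Dder P x g η p (Dmat P x g η q r) - Dder P x g η q (Dmat P x g η p r) := by
    have h := htf (δ p) (δ q) ⟨_, hcomm p q⟩ (by rw [hδ p, hδ q])
    simpa only [Submodule.coe_sub, Pi.sub_apply, hD_apply] using congrFun (congrArg Subtype.val h) (x r)
  have hmetric' (p q r : Fin m) : Dder P x g η p (Dmat P x g η q r) =
      (nabla (δ p) (δ q) : A → A) (x r) + (nabla (δ p) (δ r) : A → A) (x q) := by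
    have h := hmetric (δ p) (δ q) (δ r)
    rwa [hδ p, hδ q, hδ r, hg_Dder (Dder_mem_innerDer x g η q), hD_apply,
      hg_Dder (nabla _ _).2, gform_comm x g hg_symm, hg_Dder (nabla _ _).2] at h
  rw [eq_sum_smul_of_coe_eq_Dder x g η hP_antisym hg_symm hKP hδ (nabla (δ i) (δ j))]
  refine Finset.sum_congr rfl fun k _ => congrArg (· • _) ?_
  rw [← two_mul_eq_koszul (fun p q r => congrArg _ (Dmat_comm x g η hP_antisym hg_symm q r))
    htorsion hmetric' i j k, ← mul_assoc, invOf_mul_self, one_mul]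

/-- For a Kähler–Poisson algebra with Levi-Civita connection `∇` on the
module `𝔤` of inner derivations: `g([𝒟ⁱ,𝒟ʲ],𝒟ᵏ) = 𝒟ⁱ(𝒟ʲᵏ) - 𝒟ʲ(𝒟ⁱᵏ)`,
and consequently
`∇_{𝒟ⁱ}𝒟ʲ = ½𝒟ⁱ(𝒟ʲᵏ)𝒟ₖ - ½𝒟ʲ(𝒟ⁱᵏ)𝒟ₖ + ½𝒟ᵏ(𝒟ⁱʲ)𝒟ₖ` (sum over `k`),
where `𝒟ₖ = g_{kl}𝒟ˡ`. -/
theorem leviCivita_on_Dder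
    {A : Type*} [CommRing A]
    (P : A → A → A)
    (hP_antisym : ∀ a b, P a b = - P b a)
    (hP_add : ∀ a b c, P a (b + c) = P a b + P a c)
    (hP_leib : ∀ a b c, P a (b * c) = P a b * c + b * P a c)
    (hP_jacobi : ∀ a b c, P a (P b c) + P b (P c a) + P c (P a b) = 0)
    {m : ℕ} (x : Fin m → A) (g : Fin m → Fin m → A)
    (hg_symm : ∀ i j, g i j = g j i)
    (η : A)
    (hKP : ∀ a b, η * (∑ i, ∑ j, ∑ k, ∑ l,
        P a (x i) * g i j * P (x j) (x k) * g k l * P (x l) b) = - P a b)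
    [Invertible (2 : A)]
    (nabla : innerDer P → innerDer P → innerDer P)
    (hc_lin1 : ∀ (a : A) (α β μ : innerDer P),
      nabla (a • α + β) μ = a • nabla α μ + nabla β μ)
    (hc_add2 : ∀ (α μ ν : innerDer P), nabla α (μ + ν) = nabla α μ + nabla α ν)
    (hc_leib : ∀ (α : innerDer P) (a : A) (μ : innerDer P),
      nabla α (a • μ) = a • nabla α μ + ((α : A → A) a) • μ)
    (hmetric : ∀ α β γ : innerDer P,
      (α : A → A) (gform x g (β : A → A) (γ : A → A)) =
        gform x g ((nabla α β : innerDer P) : A → A) (γ : A → A)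
        + gform x g (β : A → A) ((nabla α γ : innerDer P) : A → A))
    (htf : ∀ α β γ : innerDer P,
      ((γ : A → A) = fun a => (α : A → A) ((β : A → A) a) - (β : A → A) ((α : A → A) a)) →
      nabla α β - nabla β α = γ) :
    (∀ i j k : Fin m,
      gform x g
        (fun a => Dder P x g η i (Dder P x g η j a) - Dder P x g η j (Dder P x g η i a))
        (Dder P x g η k)
      = Dder P x g η i (Dmat P x g η j k) - Dder P x g η j (Dmat P x g η i k)) ∧
    (∀ (δ : Fin m → innerDer P), (∀ i, ((δ i : innerDer P) : A → A) = Dder P x g η i) →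
      ∀ i j : Fin m,
        nabla (δ i) (δ j) =
          ∑ k, (⅟(2 : A) *
              (Dder P x g η i (Dmat P x g η j k) - Dder P x g η j (Dmat P x g η i k)
                + Dder P x g η k (Dmat P x g η i j))) •
            (∑ l, g k l • δ l)) :=
  leviCivita_on_Dder_general P hP_antisym hP_add hP_leib hP_jacobi x g hg_symm η hKP nabla hmetric
    htf
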